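/- arXiv:2312.04924 — 2 statements merged into one kernel-verified Lean document; each statement's English description precedes it below -/
import Mathlib

section
/- Let D_1,...,D_t be i.i.d. random variables uniformly distributed on {1,...,n}. Then for q > 0, P( Σ_{j=1}^t √(12/(n²−1)) (D_j − (n+1)/2) ≥ √(2qt log n) ) ≤ n^{−q + (√6/3) √(q³ log(n)/t)}. -/
/-!
Bernstein's inequality. For `|y| < 3` the exponential series gives
`exp y ≤ 1 + y + y² / (2 (1 - |y|/3))`, because `k! ≥ 2 · 3^(k-2)` for `k ≥ 2`. Integrating this
against a centred variable `X` with `|X| ≤ M` and `E[X²] ≤ v` gives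
`E[exp (λ X)] ≤ exp (v λ² / (2 (1 - λ M / 3)))`, and Chernoff's bound for an independent sum with
total variance `V`, at `λ = ζ / (V + M ζ / 3)`, gives `P(Σ X ≥ ζ) ≤ exp (-(ζ²/2) / (V + M ζ / 3))`.

The standardised uniform summands are centred, have unit variance and are bounded by `√3`.
With `ζ = √(2 q t log n)` the exponent is `-q t log n / (t + ζ/√3)`, which is at most
`log n · (-q + q ζ / (√3 t))` since `1 / (1 + x) ≥ 1 - x`.
-/

open MeasureTheory ProbabilityTheory Finset Real
open scoped Nat

theorem two_mul_three_pow_le_factorial (k : ℕ) : 2 * 3 ^ k ≤ (k + 2)! := by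
  induction k with
  | zero => simp [Nat.factorial]
  | succ k ih =>
    rw [Nat.factorial_succ, pow_succ]
    nlinarith

theorem Real.exp_le_one_add_add_sq_div {y : ℝ} (hy : |y| < 3) :
    exp y ≤ 1 + y + y ^ 2 / (2 * (1 - |y| / 3)) := by
  have hr0 : 0 ≤ |y| / 3 := by positivity
  have hr1 : |y| / 3 < 1 := by linarith
  have hs := summable_pow_div_factorial y
  have hgeom : HasSum (fun k : ℕ => y ^ 2 / 2 * (|y| / 3) ^ k) (y ^ 2 / (2 * (1 - |y| / 3))) := by
    have h := (hasSum_geometric_of_lt_one hr0 hr1).mul_left (y ^ 2 / 2)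
    rwa [← div_eq_mul_inv, div_div] at h
  have hterm (k : ℕ) : y ^ (k + 2) / (k + 2)! ≤ y ^ 2 / 2 * (|y| / 3) ^ k := by
    have hfac : (2 * 3 ^ k : ℝ) ≤ (k + 2)! := by exact_mod_cast two_mul_three_pow_le_factorial k
    calc y ^ (k + 2) / (k + 2)! ≤ |y| ^ (k + 2) / (2 * 3 ^ k) :=
          div_le_div₀ (by positivity) ((le_abs_self _).trans (abs_pow y _).le) (by positivity) hfac
      _ = y ^ 2 / 2 * (|y| / 3) ^ k := by rw [pow_add, sq_abs, div_pow]; field_simp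
  have hexp : exp y = ∑' k : ℕ, y ^ k / k ! := by
    rw [exp_eq_exp_ℝ, NormedSpace.exp_eq_tsum_div]
  calc exp y = 1 + y + ∑' k : ℕ, y ^ (k + 2) / (k + 2)! := by
        rw [hexp, hs.tsum_eq_zero_add, ((summable_nat_add_iff 1).2 hs).tsum_eq_zero_add]
        simp [add_assoc]
    _ ≤ 1 + y + y ^ 2 / (2 * (1 - |y| / 3)) := by
        gcongr
        exact hasSum_le hterm ((summable_nat_add_iff 2).2 hs).hasSum hgeom

section Bernstein

variable {Ω : Type*} [MeasurableSpace Ω] {μ : Measure Ω} [IsProbabilityMeasure μ]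

theorem mgf_le_exp_of_abs_le {X : Ω → ℝ} {M v l : ℝ} (hX : AEMeasurable X μ)
    (hbd : ∀ᵐ ω ∂μ, |X ω| ≤ M) (hmean : μ[X] = 0) (hvar : ∫ ω, X ω ^ 2 ∂μ ≤ v)
    (hl : 0 ≤ l) (hlM : l * M < 3) :
    mgf X μ l ≤ exp (v * (l ^ 2 / (2 * (1 - l * M / 3)))) := by
  set c := l ^ 2 / (2 * (1 - l * M / 3))
  have hc : 0 ≤ c := div_nonneg (sq_nonneg l) (by linarith)
  have hXint : Integrable X μ :=
    .of_bound hX.aestronglyMeasurable M (by simpa only [norm_eq_abs] using hbd)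
  have hX2int : Integrable (fun ω => X ω ^ 2) μ :=
    .of_bound (hX.pow_const 2).aestronglyMeasurable (M ^ 2) (hbd.mono fun ω h => by
      rw [norm_eq_abs, abs_pow]; exact pow_le_pow_left₀ (abs_nonneg _) h 2)
  have hpoint : ∀ᵐ ω ∂μ, exp (l * X ω) ≤ 1 + l * X ω + c * X ω ^ 2 := by
    filter_upwards [hbd] with ω hω
    have hy : |l * X ω| ≤ l * M := by rw [abs_mul, abs_of_nonneg hl]; gcongr
    calc exp (l * X ω) ≤ 1 + l * X ω + (l * X ω) ^ 2 / (2 * (1 - |l * X ω| / 3)) :=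
          exp_le_one_add_add_sq_div (by linarith)
      _ ≤ 1 + l * X ω + c * X ω ^ 2 := by
          have hpos : 0 < 1 - l * M / 3 := by linarith
          rw [show c * X ω ^ 2 = (l * X ω) ^ 2 / (2 * (1 - l * M / 3)) by ring]
          gcongr
  have hlin : Integrable (fun ω => 1 + l * X ω) μ := (integrable_const 1).add (hXint.const_mul l)
  calc mgf X μ l
      ≤ ∫ ω, 1 + l * X ω + c * X ω ^ 2 ∂μ :=
        integral_mono_ae (integrable_exp_mul_of_le l M hl hX (hbd.mono fun ω h =>
          (le_abs_self _).trans h)) (hlin.add (hX2int.const_mul c)) hpoint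
    _ = 1 + c * ∫ ω, X ω ^ 2 ∂μ := by
        rw [integral_add hlin (hX2int.const_mul c),
          integral_add (integrable_const 1) (hXint.const_mul l), integral_const_mul,
          integral_const_mul, hmean]
        simp
    _ ≤ 1 + v * c := by nlinarith
    _ ≤ exp (v * c) := by linarith [add_one_le_exp (v * c)]

theorem measure_sum_ge_le_of_iIndepFun_of_abs_le {ι : Type*} {X : ι → Ω → ℝ}
    (hindep : iIndepFun X μ) (hmeas : ∀ i, Measurable (X i)) (s : Finset ι) {M ζ : ℝ}
    (v : ι → ℝ) (hM : 0 ≤ M) (hbd : ∀ i ∈ s, ∀ᵐ ω ∂μ, |X i ω| ≤ M)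
    (hmean : ∀ i ∈ s, μ[X i] = 0) (hvar : ∀ i ∈ s, ∫ ω, X i ω ^ 2 ∂μ ≤ v i)
    (hv : 0 < ∑ i ∈ s, v i) (hζ : 0 ≤ ζ) :
    μ.real {ω | ζ ≤ ∑ i ∈ s, X i ω} ≤ exp (-(ζ ^ 2 / 2) / (∑ i ∈ s, v i + M * ζ / 3)) := by
  set V := ∑ i ∈ s, v i
  set A := V + M * ζ / 3 with hA_def
  have hA : 0 < A := by positivity
  set l := ζ / A
  have hl : 0 ≤ l := by positivity
  have hlA : l * A = ζ := div_mul_cancel₀ ζ hA.ne'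
  have hlM : l * M < 3 := by
    rw [div_mul_eq_mul_div, div_lt_iff₀ hA, hA_def]; linarith
  set c := l ^ 2 / (2 * (1 - l * M / 3))
  have hmgf : mgf (∑ i ∈ s, X i) μ l ≤ exp (V * c) := by
    rw [hindep.mgf_sum hmeas, sum_mul, exp_sum]
    exact prod_le_prod (fun i _ => mgf_nonneg) fun i hi =>
      mgf_le_exp_of_abs_le (hmeas i).aemeasurable (hbd i hi) (hmean i hi) (hvar i hi) hl hlM
  have hint : Integrable (fun ω => exp (l * (∑ i ∈ s, X i) ω)) μ :=
    hindep.integrable_exp_mul_sum hmeas fun i hi =>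
      integrable_exp_mul_of_le l M hl (hmeas i).aemeasurable ((hbd i hi).mono fun ω h =>
        (le_abs_self _).trans h)
  have hexponent : -l * ζ + V * c = -(ζ ^ 2 / 2) / A := by
    have h1 : 1 - l * M / 3 = V / A := by
      rw [eq_div_iff hA.ne']; linear_combination hA_def - M / 3 * hlA
    simp only [c, h1]; field_simp; linear_combination (l * A - ζ) * hlA
  calc μ.real {ω | ζ ≤ ∑ i ∈ s, X i ω}
      = μ.real {ω | ζ ≤ (∑ i ∈ s, X i) ω} := by simp only [Finset.sum_apply]
    _ ≤ exp (-l * ζ) * mgf (∑ i ∈ s, X i) μ l := measure_ge_le_exp_mul_mgf ζ hl hint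
    _ ≤ exp (-l * ζ) * exp (V * c) := by gcongr
    _ = exp (-(ζ ^ 2 / 2) / A) := by rw [← exp_add, hexponent]

end Bernstein

theorem PMF.toMeasure_uniformOfFinset {α : Type*} [MeasurableSpace α]
    [MeasurableSingletonClass α] (s : Finset α) (hs : s.Nonempty) :
    (uniformOfFinset s hs).toMeasure = (#s : ENNReal)⁻¹ • ∑ a ∈ s, Measure.dirac a := by
  classical
  ext t ht
  rw [toMeasure_uniformOfFinset_apply hs t ht, Measure.smul_apply, Measure.finsetSum_apply]
  simp [Measure.dirac_apply' _ ht, Set.indicator_apply, div_eq_mul_inv, mul_comm]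

section UniformLaw

variable {Ω : Type*} [MeasurableSpace Ω] {μ : Measure Ω} {s : Finset ℕ} {hs : s.Nonempty}
  {D : Ω → ℝ}

theorem map_eq_smul_sum_dirac_of_map_eq_uniform
    (hD : μ.map D = (PMF.uniformOfFinset s hs).toMeasure.map (fun i : ℕ => (i : ℝ))) :
    μ.map D = (#s : ENNReal)⁻¹ • ∑ i ∈ s, Measure.dirac (i : ℝ) := by
  rw [hD, PMF.toMeasure_uniformOfFinset, Measure.map_smul,
    Measure.map_finset_sum measurable_from_top.aemeasurable]
  simp [Measure.map_dirac' measurable_from_top]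

theorem integral_comp_of_map_eq_uniform (hDm : AEMeasurable D μ)
    (hD : μ.map D = (PMF.uniformOfFinset s hs).toMeasure.map (fun i : ℕ => (i : ℝ)))
    {f : ℝ → ℝ} (hf : Measurable f) :
    ∫ ω, f (D ω) ∂μ = (#s : ℝ)⁻¹ * ∑ i ∈ s, f i := by
  rw [← integral_map hDm hf.aestronglyMeasurable, map_eq_smul_sum_dirac_of_map_eq_uniform hD,
    integral_smul_measure, integral_finsetSum_measure fun i _ => integrable_dirac (by simp)]
  simp

theorem ae_mem_of_map_eq_uniform (hDm : AEMeasurable D μ)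
    (hD : μ.map D = (PMF.uniformOfFinset s hs).toMeasure.map (fun i : ℕ => (i : ℝ))) :
    ∀ᵐ ω ∂μ, D ω ∈ s.image (fun i : ℕ => (i : ℝ)) := by
  have hmeas := (s.image (fun i : ℕ => (i : ℝ))).measurableSet
  refine (ae_map_iff hDm hmeas).1 ?_
  rw [map_eq_smul_sum_dirac_of_map_eq_uniform hD, ae_iff, Measure.smul_apply,
    Measure.finsetSum_apply]
  simp

end UniformLaw

noncomputable def stdUniform (n : ℕ) (x : ℝ) : ℝ :=
  √(12 / ((n : ℝ) ^ 2 - 1)) * (x - ((n : ℝ) + 1) / 2)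

theorem measurable_stdUniform (n : ℕ) : Measurable (stdUniform n) :=
  (continuous_const.mul (continuous_id.sub continuous_const)).measurable

theorem natCast_sq_sub_one_pos {n : ℕ} (hn : 2 ≤ n) : (0 : ℝ) < (n : ℝ) ^ 2 - 1 := by
  have : (2 : ℝ) ≤ n := by exact_mod_cast hn
  nlinarith

theorem stdUniform_sq {n : ℕ} (hn : 2 ≤ n) (x : ℝ) :
    stdUniform n x ^ 2 = 12 / ((n : ℝ) ^ 2 - 1) * (x - ((n : ℝ) + 1) / 2) ^ 2 := by
  have hn2 := natCast_sq_sub_one_pos hn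
  rw [stdUniform, mul_pow, sq_sqrt (by positivity)]

theorem abs_stdUniform_le {n : ℕ} (hn : 2 ≤ n) {x : ℝ} (hx1 : 1 ≤ x) (hxn : x ≤ n) :
    |stdUniform n x| ≤ √3 := by
  have hn2 := natCast_sq_sub_one_pos hn
  rw [← sqrt_sq_eq_abs, stdUniform_sq hn]
  gcongr
  rw [div_mul_eq_mul_div, div_le_iff₀ hn2]
  nlinarith

theorem sum_Icc_natCast (n : ℕ) : ∑ i ∈ Icc 1 n, (i : ℝ) = n * (n + 1) / 2 := by
  induction n with
  | zero => simp
  | succ n ih => rw [sum_Icc_succ_top (by omega), ih]; push_cast; ring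

theorem sum_Icc_natCast_sq (n : ℕ) :
    ∑ i ∈ Icc 1 n, (i : ℝ) ^ 2 = n * (n + 1) * (2 * n + 1) / 6 := by
  induction n with
  | zero => simp
  | succ n ih => rw [sum_Icc_succ_top (by omega), ih]; push_cast; ring

theorem sum_stdUniform (n : ℕ) : ∑ i ∈ Icc 1 n, stdUniform n i = 0 := by
  simp only [stdUniform, ← mul_sum, sum_sub_distrib, sum_Icc_natCast, sum_const, Nat.card_Icc,
    add_tsub_cancel_right, nsmul_eq_mul]
  ring

theorem sum_stdUniform_sq {n : ℕ} (hn : 2 ≤ n) : ∑ i ∈ Icc 1 n, stdUniform n i ^ 2 = n := by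
  have hn2 := natCast_sq_sub_one_pos hn
  simp only [stdUniform_sq hn, ← mul_sum, sub_sq, sum_add_distrib, sum_sub_distrib, ← sum_mul,
    sum_Icc_natCast, sum_Icc_natCast_sq, sum_const, Nat.card_Icc, add_tsub_cancel_right,
    nsmul_eq_mul]
  field_simp
  ring

section StdUniformLaw

variable {Ω : Type*} [MeasurableSpace Ω] {μ : Measure Ω} {n : ℕ} {D : Ω → ℝ}

theorem ae_abs_stdUniform_le (hn : 2 ≤ n) {hs : (Icc 1 n).Nonempty} (hDm : AEMeasurable D μ)
    (hD : μ.map D = (PMF.uniformOfFinset (Icc 1 n) hs).toMeasure.map (fun i : ℕ => (i : ℝ))) :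
    ∀ᵐ ω ∂μ, |stdUniform n (D ω)| ≤ √3 := by
  filter_upwards [ae_mem_of_map_eq_uniform hDm hD] with ω hω
  obtain ⟨i, hi, hiD⟩ := mem_image.1 hω
  rw [← hiD]
  rw [mem_Icc] at hi
  exact abs_stdUniform_le hn (by exact_mod_cast hi.1) (by exact_mod_cast hi.2)

theorem integral_stdUniform {hs : (Icc 1 n).Nonempty} (hDm : AEMeasurable D μ)
    (hD : μ.map D = (PMF.uniformOfFinset (Icc 1 n) hs).toMeasure.map (fun i : ℕ => (i : ℝ))) :
    ∫ ω, stdUniform n (D ω) ∂μ = 0 := by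
  rw [integral_comp_of_map_eq_uniform hDm hD (measurable_stdUniform n),
    sum_stdUniform, mul_zero]

theorem integral_stdUniform_sq (hn : 2 ≤ n) {hs : (Icc 1 n).Nonempty} (hDm : AEMeasurable D μ)
    (hD : μ.map D = (PMF.uniformOfFinset (Icc 1 n) hs).toMeasure.map (fun i : ℕ => (i : ℝ))) :
    ∫ ω, stdUniform n (D ω) ^ 2 ∂μ = 1 := by
  have hn0 : (n : ℝ) ≠ 0 := by positivity
  rw [integral_comp_of_map_eq_uniform hDm hD
      ((measurable_stdUniform n).pow_const 2), sum_stdUniform_sq hn, Nat.card_Icc,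
    add_tsub_cancel_right, inv_mul_cancel₀ hn0]

end StdUniformLaw

theorem bernstein_exponent_le {q t L : ℝ} (hq : 0 < q) (ht : 0 < t) (hL : 0 < L) :
    -(√(2 * q * t * L) ^ 2 / 2) / (t + √3 * √(2 * q * t * L) / 3) ≤
      L * (-q + √6 / 3 * √(q ^ 3 * L / t)) := by
  set a := √3 * √(2 * q * t * L) / 3 with ha_def
  have ha : 0 ≤ a := by positivity
  have hsqrt : √6 / 3 * √(q ^ 3 * L / t) = q * a / t := by
    calc √6 / 3 * √(q ^ 3 * L / t) = √(6 * (q ^ 3 * L / t)) / 3 := by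
          rw [sqrt_mul (by norm_num)]; ring
      _ = √((q / t) ^ 2 * (3 * (2 * q * t * L))) / 3 := by congr 2; field_simp; ring
      _ = q * a / t := by
          rw [sqrt_mul (by positivity), sqrt_sq (by positivity), sqrt_mul (by norm_num), ha_def]
          ring
  have hexpand : L * (-q + q * a / t) * (t + a) = -(q * t * L) + q * L * a ^ 2 / t := by
    field_simp; ring
  rw [sq_sqrt (by positivity), hsqrt, div_le_iff₀ (by positivity), hexpand]
  have : 0 ≤ q * L * a ^ 2 / t := by positivity
  linarith

/-- Bernstein-type tail bound for sums of standardized i.i.d. discrete uniforms on `{1,...,n}`: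
for `q > 0`,
`P( Σ_j √(12/(n²−1)) (D_j − (n+1)/2) ≥ √(2 q t log n) ) ≤ n^{−q + (√6/3)√(q³ log(n)/t)}`. -/
theorem stmt_5 {Ω : Type*} [MeasurableSpace Ω] (μ : Measure Ω) [IsProbabilityMeasure μ]
    (n t : ℕ) (hn : 2 ≤ n) (ht : 1 ≤ t) (q : ℝ) (hq : 0 < q)
    (D : Fin t → Ω → ℝ) (hmeas : ∀ j, Measurable (D j))
    (hdist : ∀ j, Measure.map (D j) μ =
      Measure.map (fun i : ℕ => (i : ℝ))
        (PMF.uniformOfFinset (Finset.Icc 1 n)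
          (Finset.nonempty_Icc.mpr (le_trans one_le_two hn))).toMeasure)
    (hindep : iIndepFun D μ) :
    (μ {ω | Real.sqrt (2 * q * t * Real.log n) ≤
        ∑ j, Real.sqrt (12 / ((n : ℝ) ^ 2 - 1)) * (D j ω - ((n : ℝ) + 1) / 2)}).toReal ≤
      (n : ℝ) ^ (-q + Real.sqrt 6 / 3 * Real.sqrt (q ^ 3 * Real.log n / t)) := by
  have ht0 : (0 : ℝ) < t := by exact_mod_cast ht
  have hL : 0 < log n := log_pos (by exact_mod_cast hn)
  have hbernstein := measure_sum_ge_le_of_iIndepFun_of_abs_le (μ := μ)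
    (X := fun j ω => stdUniform n (D j ω)) (hindep.comp _ fun _ => measurable_stdUniform n)
    (fun j => (measurable_stdUniform n).comp (hmeas j)) univ (fun _ => 1) (sqrt_nonneg 3)
    (fun j _ => ae_abs_stdUniform_le hn (hmeas j).aemeasurable (hdist j))
    (fun j _ => integral_stdUniform (hmeas j).aemeasurable (hdist j))
    (fun j _ => (integral_stdUniform_sq hn (hmeas j).aemeasurable (hdist j)).le)
    (by simpa using ht0) (sqrt_nonneg (2 * q * t * log n))
  simp only [sum_const, card_univ, Fintype.card_fin, nsmul_eq_mul, mul_one] at hbernstein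
  refine hbernstein.trans ?_
  rw [rpow_def_of_pos (by positivity)]
  exact exp_le_exp.2 (bernstein_exponent_le hq ht0 hL)
end

section
/- Let X ~ Uniform[−(2+c), 2+c] for some c ∈ (−1, 1], and let Y₁, Y₂ be i.i.d. Uniform[−1,1], independent of X. Then P(X > max{Y₁, Y₂}) = (5 + 3c)/(12 + 6c). In particular, E[F₀(X)²] does not converge along c = sin(n) as n → ∞. -/
/-!
Given `X = x`, the event `max Y₁ Y₂ < X` has probability `F₀(x)²`, where `F₀` is the CDF of
`Uniform[-1, 1]`; hence the probability is the average of `F₀²` over `[-(2+c), 2+c]`. Since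
`F₀² = 0` left of `-1`, `F₀² = 1` right of `1` and `∫₋₁¹ F₀² = 2/3`, this average is
`(2/3 + (1 + c)) / (4 + 2c)`.

For the second claim, `t ↦ (5 + 3t)/(12 + 6t) = 1/2 - (12 + 6t)⁻¹` has a continuous inverse on
`[-1, 1]`, so convergence would force `sin n` to converge. It does not: from
`sin((n+2)θ) - sin(nθ) = 2 sin θ cos((n+1)θ)` and its cosine analogue, a limit of `sin(nθ)` forces
`cos(nθ) → 0` and then `sin(nθ) → 0`, contradicting `sin² + cos² = 1`.
-/

open MeasureTheory ProbabilityTheory Filter Set Topology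

theorem ProbabilityTheory.iIndepFun.map_prodMk_prodMk_eq_prod {Ω E : Type*} [MeasurableSpace Ω]
    [MeasurableSpace E] {μ : Measure Ω} [IsFiniteMeasure μ] {X Y Z : Ω → E} (hX : Measurable X)
    (hY : Measurable Y) (hZ : Measurable Z) (hind : iIndepFun ![X, Y, Z] μ) :
    μ.map (fun ω => (X ω, Y ω, Z ω)) = (μ.map X).prod ((μ.map Y).prod (μ.map Z)) := by
  have hYZ : IndepFun Y Z μ := by simpa using hind.indepFun (i := 1) (j := 2) (by decide)
  have hX_YZ : IndepFun X (fun ω => (Y ω, Z ω)) μ := by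
    have hmeas : ∀ i, Measurable (![X, Y, Z] i) := fun i => by fin_cases i <;> assumption
    simpa using (hind.indepFun_prodMk hmeas 1 2 0 (by decide) (by decide)).symm
  rw [(indepFun_iff_map_prod_eq_prod_map_map hX.aemeasurable
      (hY.prodMk hZ).aemeasurable).mp hX_YZ,
    (indepFun_iff_map_prod_eq_prod_map_map hY.aemeasurable hZ.aemeasurable).mp hYZ]

theorem measure_max_lt_eq_lintegral {Ω : Type*} [MeasurableSpace Ω] {μ : Measure Ω}
    [IsFiniteMeasure μ] {X Y₁ Y₂ : Ω → ℝ} (hX : Measurable X) (hY₁ : Measurable Y₁)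
    (hY₂ : Measurable Y₂) (hind : iIndepFun ![X, Y₁, Y₂] μ) :
    μ {ω | max (Y₁ ω) (Y₂ ω) < X ω} = ∫⁻ x, μ.map Y₁ (Iio x) * μ.map Y₂ (Iio x) ∂μ.map X := by
  have hS : MeasurableSet {p : ℝ × ℝ × ℝ | max p.2.1 p.2.2 < p.1} :=
    measurableSet_lt (measurable_snd.fst.max measurable_snd.snd) measurable_fst
  have hslice : ∀ x : ℝ, Prod.mk x ⁻¹' {p : ℝ × ℝ × ℝ | max p.2.1 p.2.2 < p.1} =
      Iio x ×ˢ Iio x := fun x => by ext; simp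
  rw [show {ω | max (Y₁ ω) (Y₂ ω) < X ω} = (fun ω => (X ω, Y₁ ω, Y₂ ω)) ⁻¹'
      {p : ℝ × ℝ × ℝ | max p.2.1 p.2.2 < p.1} from rfl,
    ← Measure.map_apply (hX.prodMk (hY₁.prodMk hY₂)) hS,
    hind.map_prodMk_prodMk_eq_prod hX hY₁ hY₂, Measure.prod_apply hS]
  simp_rw [hslice, Measure.prod_prod]

theorem Real.volume_Icc_inter_Iio {a b : ℝ} (h : a ≤ b) (x : ℝ) :
    volume (Icc a b ∩ Iio x) = ENNReal.ofReal (projIcc a b h x - a) := by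
  have hIic : Icc a b ∩ Iic x = Icc a (min b x) := by ext; simp [and_assoc]
  rw [measure_congr (ae_eq_refl _ |>.inter Iio_ae_eq_Iic), hIic, Real.volume_Icc, coe_projIcc,
    ← max_sub_sub_right, sub_self, ENNReal.ofReal_max, ENNReal.ofReal_zero, zero_max]

theorem cond_Icc_apply_Iio {a b : ℝ} (h : a < b) (x : ℝ) :
    volume[|Icc a b] (Iio x) = ENNReal.ofReal ((projIcc a b h.le x - a) / (b - a)) := by
  rw [cond_apply measurableSet_Icc, Real.volume_Icc_inter_Iio h.le, Real.volume_Icc,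
    ENNReal.ofReal_div_of_pos (sub_pos.2 h), ENNReal.div_eq_inv_mul]

theorem lintegral_cond_Icc_ofReal {a b : ℝ} (h : a < b) {g : ℝ → ℝ}
    (hg : IntegrableOn g (Icc a b)) (hg0 : ∀ x, 0 ≤ g x) :
    ∫⁻ x, ENNReal.ofReal (g x) ∂volume[|Icc a b] =
      ENNReal.ofReal ((∫ x in a..b, g x) / (b - a)) := by
  rw [ProbabilityTheory.cond, lintegral_smul_measure, Real.volume_Icc,
    ← ofReal_integral_eq_lintegral_ofReal hg (Eventually.of_forall hg0),
    integral_Icc_eq_integral_Ioc, ← intervalIntegral.integral_of_le h.le,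
    ENNReal.ofReal_div_of_pos (sub_pos.2 h), ENNReal.div_eq_inv_mul, smul_eq_mul]

theorem intervalIntegral.integral_comp_projIcc {a b c d : ℝ} (hab : a ≤ b) (hca : c ≤ a)
    (hbd : b ≤ d) {φ : ℝ → ℝ} (hφ : Continuous φ) :
    ∫ x in c..d, φ (projIcc a b hab x) = (a - c) * φ a + (∫ x in a..b, φ x) + (d - b) * φ b := by
  have hint : ∀ u v : ℝ, IntervalIntegrable (fun x => φ (projIcc a b hab x)) volume u v :=
    fun u v => (hφ.comp (continuous_subtype_val.comp continuous_projIcc)).intervalIntegrable u v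
  have hleft : EqOn (fun x => φ (projIcc a b hab x)) (fun _ => φ a) (uIcc c a) := fun x hx => by
    rw [uIcc_of_le hca] at hx
    simp [projIcc_of_le_left hab hx.2]
  have hmid : EqOn (fun x => φ (projIcc a b hab x)) φ (uIcc a b) := fun x hx => by
    rw [uIcc_of_le hab] at hx
    simp [projIcc_of_mem hab hx]
  have hright : EqOn (fun x => φ (projIcc a b hab x)) (fun _ => φ b) (uIcc b d) := fun x hx => by
    rw [uIcc_of_le hbd] at hx
    simp [projIcc_of_right_le hab hx.1]
  rw [← integral_add_adjacent_intervals (hint c b) (hint b d),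
    ← integral_add_adjacent_intervals (hint c a) (hint a b), integral_congr hleft,
    integral_congr hmid, integral_congr hright, integral_const, integral_const, smul_eq_mul,
    smul_eq_mul]

theorem measure_max_lt_of_isUniform {Ω : Type*} [MeasurableSpace Ω] {μ : Measure Ω}
    [IsFiniteMeasure μ] {c : ℝ} (hc : -1 ≤ c) {X Y₁ Y₂ : Ω → ℝ} (hX : Measurable X)
    (hY₁ : Measurable Y₁) (hY₂ : Measurable Y₂)
    (huX : pdf.IsUniform X (Icc (-(2 + c)) (2 + c)) μ)
    (huY₁ : pdf.IsUniform Y₁ (Icc (-1 : ℝ) 1) μ) (huY₂ : pdf.IsUniform Y₂ (Icc (-1 : ℝ) 1) μ)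
    (hind : iIndepFun ![X, Y₁, Y₂] μ) :
    (μ {ω | max (Y₁ ω) (Y₂ ω) < X ω}).toReal = (5 + 3 * c) / (12 + 6 * c) := by
  have hcdf_nonneg : ∀ x, 0 ≤ ((projIcc (-1 : ℝ) 1 (by norm_num) x : ℝ) - -1) / (1 - -1) :=
    fun x => div_nonneg (sub_nonneg.2 (projIcc _ _ _ x).2.1) (by norm_num)
  rw [measure_max_lt_eq_lintegral hX hY₁ hY₂ hind, huX, huY₁, huY₂]
  simp_rw [cond_Icc_apply_Iio (by norm_num : (-1 : ℝ) < 1), ← ENNReal.ofReal_mul (hcdf_nonneg _)]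
  rw [lintegral_cond_Icc_ofReal (by linarith) (by fun_prop : Continuous _).integrableOn_Icc
      (fun _ => mul_self_nonneg _),
    intervalIntegral.integral_comp_projIcc
      (φ := fun t => (t - -1) / (1 - -1) * ((t - -1) / (1 - -1))) _ (by linarith) (by linarith)
      (by fun_prop)]
  have hquad : ∫ x in (-1 : ℝ)..1, (x - -1) / (1 - -1) * ((x - -1) / (1 - -1)) = 2 / 3 := by
    simp only [← sq, div_pow, intervalIntegral.integral_div, sub_neg_eq_add,
      intervalIntegral.integral_comp_add_right (fun x => x ^ 2), integral_pow]
    norm_num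
  rw [hquad, ENNReal.toReal_ofReal (div_nonneg (by norm_num; linarith) (by linarith)),
    div_eq_div_iff (by linarith) (by linarith)]
  ring

theorem Real.not_tendsto_sin_nat_mul {θ : ℝ} (hθ : Real.sin θ ≠ 0) (a : ℝ) :
    ¬ Tendsto (fun n : ℕ => Real.sin (n * θ)) atTop (𝓝 a) := by
  have shift_sub : ∀ (u : ℕ → ℝ) (l : ℝ), Tendsto u atTop (𝓝 l) →
      Tendsto (fun n => (u (n + 2) - u n) / (2 * Real.sin θ)) atTop (𝓝 0) := by
    intro u l hu
    simpa using ((hu.comp (tendsto_add_atTop_nat 2)).sub hu).div_const (2 * Real.sin θ)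
  have hcast : ∀ n : ℕ, ((n + 2 : ℕ) : ℝ) * θ = ((n + 1 : ℕ) : ℝ) * θ + θ ∧
      (n : ℝ) * θ = ((n + 1 : ℕ) : ℝ) * θ - θ := fun n => by push_cast; constructor <;> ring
  intro hsin
  have hcos : Tendsto (fun n : ℕ => Real.cos (n * θ)) atTop (𝓝 0) := by
    rw [← tendsto_add_atTop_iff_nat 1]
    refine (shift_sub _ _ hsin).congr fun n => ?_
    rw [(hcast n).1, (hcast n).2, Real.sin_add, Real.sin_sub]
    field_simp
    ring
  have hsin0 : Tendsto (fun n : ℕ => Real.sin (n * θ)) atTop (𝓝 0) := by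
    rw [← tendsto_add_atTop_iff_nat 1]
    refine ((shift_sub _ _ hcos).neg.congr fun n => ?_).trans (by simp)
    rw [(hcast n).1, (hcast n).2, Real.cos_add, Real.cos_sub]
    field_simp
    ring
  have h := (hsin0.pow 2).add (hcos.pow 2)
  simp only [Real.sin_sq_add_cos_sq] at h
  norm_num at h

theorem not_tendsto_five_add_three_sin_div_twelve_add_six_sin (L : ℝ) :
    ¬ Tendsto (fun n : ℕ => (5 + 3 * Real.sin n) / (12 + 6 * Real.sin n)) atTop (𝓝 L) := by
  intro hL
  have hpos : ∀ n : ℕ, 0 < 12 + 6 * Real.sin n := fun n => by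
    linarith [Real.neg_one_le_sin n]
  have hgap : ∀ n : ℕ, 1 / 2 - (5 + 3 * Real.sin n) / (12 + 6 * Real.sin n) =
      (12 + 6 * Real.sin n)⁻¹ := fun n => by
    refine eq_inv_of_mul_eq_one_left ?_
    rw [sub_mul, div_mul_cancel₀ _ (hpos n).ne']
    ring
  have hgapL : 18⁻¹ ≤ 1 / 2 - L := by
    refine ge_of_tendsto (hL.const_sub _) (Eventually.of_forall fun n => ?_)
    rw [hgap]
    exact inv_anti₀ (hpos n) (by linarith [Real.sin_le_one n])
  have hsin := (((hL.const_sub (1 / 2)).inv₀ (by positivity)).sub_const 12).div_const 6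
  have hsin_one : Real.sin 1 ≠ 0 :=
    (Real.sin_pos_of_pos_of_lt_pi one_pos (by linarith [Real.pi_gt_three])).ne'
  refine Real.not_tendsto_sin_nat_mul hsin_one _ (hsin.congr fun n => ?_)
  rw [hgap, inv_inv, mul_one]
  ring

/-- If `X ~ Uniform[−(2+c), 2+c]` with `c ∈ (−1, 1]` and `Y₁, Y₂` are i.i.d.
`Uniform[−1,1]`, all independent, then `P(X > max{Y₁, Y₂}) = (5+3c)/(12+6c)`.
In particular, the sequence `n ↦ (5+3 sin n)/(12+6 sin n)` (the value of
`E[F₀(X)²]` along `c = sin n`) does not converge. -/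
theorem stmt_18 :
    (∀ {Ω : Type} [MeasurableSpace Ω] (μ : Measure Ω), ∀ [IsProbabilityMeasure μ],
      ∀ (c : ℝ), -1 < c → c ≤ 1 →
      ∀ (X Y₁ Y₂ : Ω → ℝ), Measurable X → Measurable Y₁ → Measurable Y₂ →
      pdf.IsUniform X (Set.Icc (-(2 + c)) (2 + c)) μ →
      pdf.IsUniform Y₁ (Set.Icc (-1 : ℝ) 1) μ →
      pdf.IsUniform Y₂ (Set.Icc (-1 : ℝ) 1) μ →
      iIndepFun ![X, Y₁, Y₂] μ →
      (μ {ω | max (Y₁ ω) (Y₂ ω) < X ω}).toReal = (5 + 3 * c) / (12 + 6 * c)) ∧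
    ¬ ∃ L : ℝ, Tendsto (fun n : ℕ => (5 + 3 * Real.sin n) / (12 + 6 * Real.sin n))
        atTop (nhds L) := by
  refine ⟨fun μ _ c hc _ X Y₁ Y₂ hX hY₁ hY₂ huX huY₁ huY₂ hind => ?_, fun ⟨L, hL⟩ => ?_⟩
  · exact measure_max_lt_of_isUniform hc.le hX hY₁ hY₂ huX huY₁ huY₂ hind
  · exact not_tendsto_five_add_three_sin_div_twelve_add_six_sin L hL
end
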